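/- arXiv:1212.1605 — 2 statements merged into one kernel-verified Lean document; each statement's English description precedes it below -/
import Mathlib

section
/- Let 𝖠 ⊆ ℝ^d be an s-regular open set and let 𝗏₁, 𝗏₂ ∈ ∂𝖠 with ‖𝗏₁ − 𝗏₂‖ ≤ s/200. Suppose that for i = 1, 2, 𝖼_i ∈ ℝ^d is such that the closed ball 𝖡(𝖼_i, s) satisfies 𝖡(𝖼_i, s) ⊆ ℝ^d ∖ 𝖠 and ∂𝖠 ∩ 𝖡(𝖼_i, s) = {𝗏_i} (i.e. it is an outer tangent ball at 𝗏_i). Then ‖𝖼₁ − 𝖼₂‖ ≤ ((1 + √799)/200)·s, and in particular ‖𝖼₁ − 𝖼₂‖ < s/6. The same bound holds for the centers of inner tangent balls (balls of radius s contained in closure(𝖠) touching ∂𝖠 exactly at 𝗏_i). -/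
/-!
Let `b` be the center of the tangent ball at `v₁` on the other side of `∂A`. The ball at `b`
meets the ball at `c₁` only at `v₁`, so `v₁` is the midpoint of `b` and `c₁`; it meets the ball
at `c₂` in at most one point, so `dist b c₂ ≥ 2s`. Apollonius's theorem in the triangle
`b c₁ c₂`, together with `dist c₂ v₁ ≤ s + s/200`, gives
`dist c₁ c₂ ^ 2 ≤ 2 ((201/200)² - 1) s² = 802 s² / 200²`, and `√802 ≤ 1 + √799`.
-/

noncomputable section

open Set Metric

/-- An open set `D ⊆ ℝ^d` is `s`-regular when every boundary point can be touched from
inside and from outside by closed balls of radius `s` meeting the boundary only there. -/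
def SReg (d : ℕ) (s : ℝ) (D : Set (EuclideanSpace ℝ (Fin d))) : Prop :=
  IsOpen D ∧
  ∀ x ∈ frontier D, ∃ cin cout : EuclideanSpace ℝ (Fin d),
    closedBall cin s ⊆ closure D ∧ closedBall cout s ⊆ Dᶜ ∧
    frontier D ∩ closedBall cin s = {x} ∧ frontier D ∩ closedBall cout s = {x}

section TangentBalls

variable {E : Type*} [NormedAddCommGroup E]

theorem add_le_dist_of_closedBall_inter_subset_singleton [NormedSpace ℝ E] [Nontrivial E]
    {x y v : E} {r₁ r₂ : ℝ} (hr₁ : 0 < r₁) (hr₂ : 0 < r₂)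
    (h : closedBall x r₁ ∩ closedBall y r₂ ⊆ {v}) : r₁ + r₂ ≤ dist x y := by
  have hopen : ball x r₁ ∩ ball y r₂ ⊆ interior {v} :=
    interior_maximal ((inter_subset_inter ball_subset_closedBall ball_subset_closedBall).trans h)
      (isOpen_ball.inter isOpen_ball)
  rw [interior_singleton, subset_empty_iff] at hopen
  exact (disjoint_ball_ball_iff hr₁ hr₂).1 (disjoint_iff_inter_eq_empty.2 hopen)

theorem midpoint_eq_of_closedBall_inter_subset_singleton [NormedSpace ℝ E]
    {x y v : E} {r : ℝ} (hxy : dist x y ≤ 2 * r)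
    (h : closedBall x r ∩ closedBall y r ⊆ {v}) : midpoint ℝ x y = v := by
  have hhalf : ‖(2 : ℝ)‖⁻¹ * dist x y ≤ r := by
    rw [Real.norm_two]; linarith
  refine h ⟨?_, ?_⟩
  · rwa [mem_closedBall, dist_midpoint_left]
  · rwa [mem_closedBall, dist_midpoint_right]

theorem dist_sq_le_of_closedBall_touching [InnerProductSpace ℝ E]
    {s δ : ℝ} (hs : 0 < s) {b c₁ c₂ v₁ v₂ : E}
    (h₁ : closedBall b s ∩ closedBall c₁ s = {v₁}) (hv₂ : v₂ ∈ closedBall c₂ s)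
    (h₂ : closedBall b s ∩ closedBall c₂ s ⊆ {v₂}) (hv : dist v₁ v₂ ≤ δ) :
    dist c₁ c₂ ^ 2 ≤ 2 * ((s + δ) ^ 2 - s ^ 2) := by
  have hδ : 0 ≤ δ := dist_nonneg.trans hv
  rcases subsingleton_or_nontrivial E with hE | hE
  · rw [Subsingleton.elim c₁ c₂, dist_self]
    nlinarith
  obtain ⟨hbv₁, hc₁v₁⟩ := (eq_singleton_iff_unique_mem.1 h₁).1
  have hbc₁ : dist b c₁ ≤ 2 * s := by
    linarith [dist_triangle_right b c₁ v₁, mem_closedBall'.1 hbv₁, mem_closedBall'.1 hc₁v₁]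
  have hmid : midpoint ℝ b c₁ = v₁ :=
    midpoint_eq_of_closedBall_inter_subset_singleton hbc₁ h₁.subset
  have hbc₂ : s + s ≤ dist b c₂ := add_le_dist_of_closedBall_inter_subset_singleton hs hs h₂
  have hv₁c₂ : dist c₂ v₁ ≤ s + δ := by
    linarith [dist_triangle c₂ v₂ v₁, mem_closedBall'.1 hv₂, dist_comm v₁ v₂]
  have hapollonius :=
    EuclideanGeometry.dist_sq_add_dist_sq_eq_two_mul_dist_midpoint_sq_add_half_dist_sq c₂ b c₁
  rw [hmid, dist_comm c₂ b, dist_comm c₂ c₁] at hapollonius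
  nlinarith [dist_nonneg (x := c₂) (y := v₁), dist_nonneg (x := b) (y := c₁)]

theorem dist_sq_le_of_tangent_closedBalls [InnerProductSpace ℝ E] {F P Q : Set E}
    (hPQ : P ∩ Q ⊆ F) {s δ : ℝ} (hs : 0 < s)
    {b c₁ c₂ v₁ v₂ : E} (hb : closedBall b s ⊆ P) (hbv₁ : v₁ ∈ closedBall b s)
    (hc₁ : closedBall c₁ s ⊆ Q) (hc₁F : F ∩ closedBall c₁ s = {v₁})
    (hc₂ : closedBall c₂ s ⊆ Q) (hc₂F : F ∩ closedBall c₂ s = {v₂}) (hv : dist v₁ v₂ ≤ δ) :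
    dist c₁ c₂ ^ 2 ≤ 2 * ((s + δ) ^ 2 - s ^ 2) := by
  have touching {c v : E} (hc : closedBall c s ⊆ Q) (hcF : F ∩ closedBall c s = {v}) :
      closedBall b s ∩ closedBall c s ⊆ {v} :=
    fun x hx ↦ hcF ▸ ⟨hPQ ⟨hb hx.1, hc hx.2⟩, hx.2⟩
  have hc₁v₁ : v₁ ∈ closedBall c₁ s := ((eq_singleton_iff_unique_mem.1 hc₁F).1).2
  refine dist_sq_le_of_closedBall_touching hs ?_ ((eq_singleton_iff_unique_mem.1 hc₂F).1).2
    (touching hc₂ hc₂F) hv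
  exact (touching hc₁ hc₁F).antisymm (singleton_subset_iff.2 ⟨hbv₁, hc₁v₁⟩)

end TangentBalls

theorem le_one_add_sqrt_799_div_200_mul_and_lt_div_six {s x : ℝ} (hs : 0 < s)
    (h : x ^ 2 ≤ 2 * ((s + s / 200) ^ 2 - s ^ 2)) :
    x ≤ (1 + √799) / 200 * s ∧ x < s / 6 := by
  have hsq : √799 ^ 2 = 799 := Real.sq_sqrt (by norm_num)
  have hlower : 1 ≤ √799 := Real.one_le_sqrt.2 (by norm_num)
  have hupper : √799 < 97 / 3 := (Real.sqrt_lt' (by norm_num)).2 (by norm_num)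
  have hx : x ≤ (1 + √799) / 200 * s :=
    le_of_sq_le_sq (by nlinarith) (by positivity)
  exact ⟨hx, by nlinarith⟩

theorem stmt_11_general (d : ℕ) (s : ℝ) (hs : 0 < s)
    (A : Set (EuclideanSpace ℝ (Fin d))) (hA : SReg d s A)
    (v₁ v₂ : EuclideanSpace ℝ (Fin d))
    (hv₁ : v₁ ∈ frontier A)
    (hclose : dist v₁ v₂ ≤ s / 200) :
    -- outer tangent balls
    (∀ c₁ c₂ : EuclideanSpace ℝ (Fin d),
      closedBall c₁ s ⊆ Aᶜ → frontier A ∩ closedBall c₁ s = {v₁} →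
      closedBall c₂ s ⊆ Aᶜ → frontier A ∩ closedBall c₂ s = {v₂} →
      dist c₁ c₂ ≤ ((1 + Real.sqrt 799) / 200) * s ∧ dist c₁ c₂ < s / 6) ∧
    -- inner tangent balls
    (∀ c₁ c₂ : EuclideanSpace ℝ (Fin d),
      closedBall c₁ s ⊆ closure A → frontier A ∩ closedBall c₁ s = {v₁} →
      closedBall c₂ s ⊆ closure A → frontier A ∩ closedBall c₂ s = {v₂} →
      dist c₁ c₂ ≤ ((1 + Real.sqrt 799) / 200) * s ∧ dist c₁ c₂ < s / 6) := by
  obtain ⟨hAopen, hreg⟩ := hA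
  obtain ⟨cin, cout, hin, hout, hinF, houtF⟩ := hreg v₁ hv₁
  have hfrontier : closure A ∩ Aᶜ ⊆ frontier A := hAopen.frontier_eq.symm.subset
  refine ⟨fun c₁ c₂ hc₁ hc₁F hc₂ hc₂F ↦ ?_, fun c₁ c₂ hc₁ hc₁F hc₂ hc₂F ↦ ?_⟩
  · exact le_one_add_sqrt_799_div_200_mul_and_lt_div_six hs <|
      dist_sq_le_of_tangent_closedBalls hfrontier hs hin (eq_singleton_iff_unique_mem.1 hinF).1.2
        hc₁ hc₁F hc₂ hc₂F hclose
  · exact le_one_add_sqrt_799_div_200_mul_and_lt_div_six hs <|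
      dist_sq_le_of_tangent_closedBalls ((inter_comm _ _).subset.trans hfrontier) hs hout
        (eq_singleton_iff_unique_mem.1 houtF).1.2 hc₁ hc₁F hc₂ hc₂F hclose

/-- **Centers of tangent balls at nearby boundary points of an `s`-regular set are close**
(Lemma 6.3 of Popov–Teixeira, "Soft local times and decoupling of random
interlacements"). -/
theorem stmt_11 (d : ℕ) (s : ℝ) (hs : 0 < s)
    (A : Set (EuclideanSpace ℝ (Fin d))) (hA : SReg d s A)
    (v₁ v₂ : EuclideanSpace ℝ (Fin d))
    (hv₁ : v₁ ∈ frontier A) (hv₂ : v₂ ∈ frontier A)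
    (hclose : dist v₁ v₂ ≤ s / 200) :
    -- outer tangent balls
    (∀ c₁ c₂ : EuclideanSpace ℝ (Fin d),
      closedBall c₁ s ⊆ Aᶜ → frontier A ∩ closedBall c₁ s = {v₁} →
      closedBall c₂ s ⊆ Aᶜ → frontier A ∩ closedBall c₂ s = {v₂} →
      dist c₁ c₂ ≤ ((1 + Real.sqrt 799) / 200) * s ∧ dist c₁ c₂ < s / 6) ∧
    -- inner tangent balls
    (∀ c₁ c₂ : EuclideanSpace ℝ (Fin d),
      closedBall c₁ s ⊆ closure A → frontier A ∩ closedBall c₁ s = {v₁} →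
      closedBall c₂ s ⊆ closure A → frontier A ∩ closedBall c₂ s = {v₂} →
      dist c₁ c₂ ≤ ((1 + Real.sqrt 799) / 200) * s ∧ dist c₁ c₂ < s / 6) :=
  stmt_11_general d s hs A hA v₁ v₂ hv₁ hclose
end
end

section
/- For every d ≥ 1 there exist (large enough) constants s₀ > 0 and h₀ ∈ ℕ with the following property: if 𝖠 ⊆ ℝ^d is an s-regular open set for some s ≥ s₀, A = 𝖠 ∩ ℤ^d, and x, y ∈ ℤ^d ∖ A satisfy ‖x − y‖ ≤ 3√d, then there exists a nearest-neighbor path in ℤ^d from x to y of length at most h₀ that does not intersect A. -/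
noncomputable section

open Set Metric

/-- The lattice `ℤ^d`. -/
abbrev ZD (d : ℕ) := Fin d → ℤ

/-- The natural embedding of `ℤ^d` into `ℝ^d` with the Euclidean metric. -/
def toE {d : ℕ} (x : ZD d) : EuclideanSpace ℝ (Fin d) := WithLp.toLp 2 (fun i => (x i : ℝ))

/-- Euclidean distance between lattice points. -/
def eucDist {d : ℕ} (x y : ZD d) : ℝ := dist (toE x) (toE y)

/-- Two lattice points are neighbours when their Euclidean distance is exactly `1`. -/
def latAdj {d : ℕ} (x y : ZD d) : Prop := eucDist x y = 1

/-!
If no point of `A` lies within `‖y - x‖` of `x`, a coordinatewise monotone lattice path from `x`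
to `y` stays in that ball and so avoids `A`. Otherwise the segment from `x` to such a point
crosses `∂A` at some `w`, and regularity gives a unit vector `u` such that the open `s`-ball
around `w - s • u` lies in `A` and the closed `s`-ball around `w + s • u` misses it. Measure
heights by `⟪u, · - w⟫`: a point `b ∉ A` has height at least `-‖b - w‖² / (2 s)`, while a point
`p` of height at least `‖p - w‖² / (2 s)` lies in the outer ball. Pick a unit lattice vector `e`
with `⟪u, e⟫ ≥ 1 / d`, climb `4 d²` steps along `e` from `x`, follow a monotone path to
`y + 4 d² • e` and descend to `y`. Every point visited other than `x` and `y` is within `O(d²)` of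
`w` and at least `1 / d` higher than `x` or `y`, which puts it in the outer ball once
`s ≥ 103 d⁵`.
-/

open scoped InnerProductSpace

section TangentBalls

variable {E : Type*} [NormedAddCommGroup E] [InnerProductSpace ℝ E]

structure HasTangentBalls (A : Set E) (s : ℝ) (w u : E) : Prop where
  norm_eq_one : ‖u‖ = 1
  ball_subset : ball (w - s • u) s ⊆ A
  closedBall_subset : closedBall (w + s • u) s ⊆ Aᶜ

lemma exists_mem_frontier_mem_segment {A : Set E} (hA : IsOpen A) {a b : E} (ha : a ∉ A)
    (hb : b ∈ A) : ∃ w ∈ frontier A, w ∈ segment ℝ a b := by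
  by_contra! h
  have hsub : segment ℝ a b ⊆ A ∪ (closure A)ᶜ := fun z hz => by
    by_cases hzA : z ∈ A
    · exact .inl hzA
    · exact .inr fun hzc => h z (hA.frontier_eq ▸ ⟨hzc, hzA⟩) hz
  rcases (convex_segment a b).isPreconnected.subset_or_subset hA isClosed_closure.isOpen_compl
    (disjoint_compl_right.mono_left subset_closure) hsub with h' | h'
  · exact ha (h' (left_mem_segment ℝ a b))
  · exact h' (right_mem_segment ℝ a b) (subset_closure hb)

lemma exists_hasTangentBalls_of_touching [Nontrivial E] {A : Set E} {s : ℝ} (hs : 0 < s)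
    (hA : IsOpen A) {w cin cout : E} (hin : closedBall cin s ⊆ closure A)
    (hout : closedBall cout s ⊆ Aᶜ) (hfin : frontier A ∩ closedBall cin s = {w})
    (hwout : w ∈ closedBall cout s) : ∃ u, HasTangentBalls A s w u := by
  have hwin : w ∈ closedBall cin s := (hfin.symm.subset rfl).2
  have hboth : closedBall cin s ∩ closedBall cout s ⊆ {w} := fun z hz =>
    hfin ▸ ⟨hA.frontier_eq ▸ ⟨hin hz.1, hout hz.2⟩, hz.1⟩
  set m := midpoint ℝ cin cout
  have hm_in : dist m cin = dist cin cout / 2 := by simp [m, dist_midpoint_left, div_eq_inv_mul]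
  have hm_out : dist m cout = dist cin cout / 2 := by
    simp [m, dist_midpoint_right, div_eq_inv_mul]
  have hcc : dist cin cout = 2 * s := by
    refine le_antisymm ?_ (not_lt.1 fun hlt => ?_)
    · linarith [dist_triangle cin w cout, mem_closedBall'.1 hwin, mem_closedBall.1 hwout]
    -- otherwise both balls contain a whole open ball around `m`, which cannot lie in `{w}`
    have hsub : ball m (s - dist cin cout / 2) ⊆ {w} := fun z hz => by
      rw [mem_ball] at hz
      exact hboth ⟨mem_closedBall.2 (by linarith [dist_triangle z m cin]),
        mem_closedBall.2 (by linarith [dist_triangle z m cout])⟩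
    have := interior_mono hsub
    rw [isOpen_ball.interior_eq, interior_singleton] at this
    exact this (mem_ball_self (by linarith))
  have hmw : m = w := hboth ⟨by simp [hm_in, hcc], by simp [hm_out, hcc]⟩
  set u := (2 * s)⁻¹ • (cout - cin)
  have hsu : s • u = (2 : ℝ)⁻¹ • (cout - cin) := by
    rw [smul_smul]; congr 1; field_simp
  have hcin : w - s • u = cin := by
    rw [hsu, ← hmw]; simp only [m, midpoint_eq_smul_add, invOf_eq_inv]; module
  have hcout : w + s • u = cout := by
    rw [hsu, ← hmw]; simp only [m, midpoint_eq_smul_add, invOf_eq_inv]; module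
  refine ⟨u, ?_, ?_, hcout ▸ hout⟩
  · rw [norm_smul, ← dist_eq_norm, dist_comm, hcc, norm_inv, Real.norm_eq_abs,
      abs_of_pos (by positivity), inv_mul_cancel₀ (by positivity)]
  · rw [hcin]
    intro z hz
    by_contra hzA
    have hzw : z ∈ frontier A ∩ closedBall cin s :=
      ⟨hA.frontier_eq ▸ ⟨hin (ball_subset_closedBall hz), hzA⟩, ball_subset_closedBall hz⟩
    rw [hfin, mem_singleton_iff] at hzw
    rw [hzw, ← hmw, mem_ball, hm_in, hcc] at hz
    linarith

lemma norm_sub_smul_sq {u : E} (hu : ‖u‖ = 1) (v : E) (t : ℝ) :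
    ‖v - t • u‖ ^ 2 = ‖v‖ ^ 2 - 2 * t * ⟪u, v⟫_ℝ + t ^ 2 := by
  rw [norm_sub_sq_real, real_inner_smul_right, norm_smul, Real.norm_eq_abs, mul_pow, sq_abs, hu,
    real_inner_comm]
  ring

lemma HasTangentBalls.notMem_of_inner_ge {A : Set E} {s r R : ℝ} {w u b p : E}
    (hT : HasTangentBalls A s w u) (hs : 0 ≤ s) (hb : b ∉ A) (hbw : ‖b - w‖ ≤ r)
    (hpb : ‖p - b‖ ≤ R) (h : r ^ 2 + (r + R) ^ 2 ≤ 2 * s * ⟪u, p - b⟫_ℝ) : p ∉ A := by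
  have hbw' : -‖b - w‖ ^ 2 ≤ 2 * s * ⟪u, b - w⟫_ℝ := by
    have hb' : s ≤ ‖(b - w) - (-s) • u‖ := by
      have : ¬ dist b (w - s • u) < s := fun h => hb (hT.ball_subset h)
      rwa [not_lt, dist_eq_norm, show b - (w - s • u) = (b - w) - (-s) • u by module] at this
    have := pow_le_pow_left₀ hs hb' 2
    rw [norm_sub_smul_sq hT.norm_eq_one] at this
    linarith
  have hpw : ‖p - w‖ ≤ r + R := by
    calc ‖p - w‖ = ‖(p - b) + (b - w)‖ := by rw [sub_add_sub_cancel]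
      _ ≤ r + R := by linarith [norm_add_le (p - b) (b - w)]
  have hinner : ⟪u, p - w⟫_ℝ = ⟪u, p - b⟫_ℝ + ⟪u, b - w⟫_ℝ := by
    rw [← inner_add_right, sub_add_sub_cancel]
  have hkey : ‖(p - w) - s • u‖ ^ 2 ≤ s ^ 2 := by
    rw [norm_sub_smul_sq hT.norm_eq_one, hinner]
    nlinarith [norm_nonneg (p - w), norm_nonneg (b - w)]
  refine hT.closedBall_subset ?_
  rw [mem_closedBall, dist_eq_norm, show p - (w + s • u) = (p - w) - s • u by abel]
  exact (pow_le_pow_iff_left₀ (norm_nonneg _) hs two_ne_zero).1 hkey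

end TangentBalls

lemma SReg.exists_hasTangentBalls {d : ℕ} {s : ℝ} {A : Set (EuclideanSpace ℝ (Fin d))}
    (hd : 1 ≤ d) (hs : 0 < s) (hA : SReg d s A) {w : EuclideanSpace ℝ (Fin d)}
    (hw : w ∈ frontier A) : ∃ u, HasTangentBalls A s w u := by
  have : Nonempty (Fin d) := ⟨⟨0, hd⟩⟩
  obtain ⟨cin, cout, hin, hout, hfin, hfout⟩ := hA.2 w hw
  exact exists_hasTangentBalls_of_touching hs hA.1 hin hout hfin (hfout.symm.subset rfl).2

section Lattice

open SimpleGraph (Walk)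

variable {d : ℕ}

@[simp] lemma toE_apply (x : ZD d) (i : Fin d) : toE x i = x i := rfl

lemma toE_add (x y : ZD d) : toE (x + y) = toE x + toE y := by ext; simp

lemma toE_sub (x y : ZD d) : toE (x - y) = toE x - toE y := by ext; simp

lemma toE_nsmul (k : ℕ) (x : ZD d) : toE (k • x) = (k : ℝ) • toE x := by ext; simp

lemma toE_single (j : Fin d) (a : ℤ) : toE (Pi.single j a) = EuclideanSpace.single j (a : ℝ) := by
  ext i; by_cases h : i = j <;> simp [h]

lemma norm_toE_le_of_abs_le {a b : ZD d} (h : ∀ i, |a i| ≤ |b i|) : ‖toE a‖ ≤ ‖toE b‖ := by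
  simp only [EuclideanSpace.norm_eq, toE_apply, Real.norm_eq_abs, sq_abs]
  exact Real.sqrt_le_sqrt <| Finset.sum_le_sum fun i _ => by exact_mod_cast sq_le_sq.2 (h i)

lemma norm_toE_sub_le_of_mem_uIcc {x y z : ZD d} (hz : z ∈ uIcc x y) :
    ‖toE z - toE x‖ ≤ ‖toE y - toE x‖ := by
  rw [← pi_univ_uIcc] at hz
  rw [← toE_sub, ← toE_sub]
  exact norm_toE_le_of_abs_le fun i => abs_sub_left_of_mem_uIcc (hz i (mem_univ i))

lemma sum_natAbs_le_norm_toE_sq (v : ZD d) : ((∑ i, (v i).natAbs : ℕ) : ℝ) ≤ ‖toE v‖ ^ 2 := by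
  rw [EuclideanSpace.norm_sq_eq]
  push_cast
  gcongr with i
  simp only [toE_apply, Real.norm_eq_abs, sq_abs, Nat.cast_natAbs]
  exact_mod_cast Int.natAbs_le_self_sq (v i)

def latticeGraph (d : ℕ) : SimpleGraph (ZD d) where
  Adj := latAdj
  symm := ⟨fun x y (h : eucDist x y = 1) => show eucDist y x = 1 by rwa [eucDist, dist_comm]⟩
  loopless := ⟨fun _ h => by simp [latAdj, eucDist] at h⟩

lemma latticeGraph_adj_add {e : ZD d} (he : ‖toE e‖ = 1) (z : ZD d) :
    (latticeGraph d).Adj z (z + e) := by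
  show dist (toE z) (toE (z + e)) = 1
  rw [dist_comm, dist_eq_norm, toE_add, add_sub_cancel_left, he]

lemma exists_walk_add_nsmul {e : ZD d} (he : ‖toE e‖ = 1) (b : ZD d) :
    ∀ n : ℕ, ∃ W : (latticeGraph d).Walk b (b + n • e),
      W.length = n ∧ ∀ z ∈ W.support, ∃ k ≤ n, z = b + k • e
  | 0 => ⟨Walk.nil.copy rfl (by simp), by simp, fun z hz => ⟨0, le_rfl, by simpa using hz⟩⟩
  | n + 1 => by
    obtain ⟨W, hlen, hW⟩ := exists_walk_add_nsmul he b n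
    refine ⟨(W.concat (latticeGraph_adj_add he _)).copy rfl (by rw [succ_nsmul, add_assoc]),
      by simp [hlen], fun z hz => ?_⟩
    rw [Walk.support_copy, Walk.support_concat, List.mem_append, List.mem_singleton] at hz
    rcases hz with hz | rfl
    · obtain ⟨k, hk, rfl⟩ := hW z hz
      exact ⟨k, by omega, rfl⟩
    · exact ⟨n + 1, le_rfl, by rw [succ_nsmul, add_assoc]⟩

lemma mem_uIcc_and_natAbs_sub_add_sign {a b : ℤ} (h : a ≠ b) :
    a + (b - a).sign ∈ uIcc a b ∧ (b - (a + (b - a).sign)).natAbs + 1 = (b - a).natAbs := by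
  rcases lt_or_gt_of_ne h with h | h
  · rw [Int.sign_eq_one_of_pos (by omega), uIcc_of_le h.le]
    exact ⟨⟨by omega, by omega⟩, by omega⟩
  · rw [Int.sign_eq_neg_one_of_neg (by omega), uIcc_of_ge h.le]
    exact ⟨⟨by omega, by omega⟩, by omega⟩

lemma exists_walk_support_subset_uIcc (x y : ZD d) :
    ∃ W : (latticeGraph d).Walk x y,
      W.length = ∑ i, (y i - x i).natAbs ∧ ∀ z ∈ W.support, z ∈ uIcc x y := by
  induction h : ∑ i, (y i - x i).natAbs generalizing x with
  | zero =>
    obtain rfl : x = y := funext fun i => by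
      have := Finset.sum_eq_zero_iff.1 h i (Finset.mem_univ i)
      omega
    exact ⟨Walk.nil, rfl, by simp⟩
  | succ n ih =>
    obtain ⟨j, hj⟩ : ∃ j, x j ≠ y j := by
      by_contra! hxy
      simp [hxy] at h
    obtain ⟨hmem, hnatAbs⟩ := mem_uIcc_and_natAbs_sub_add_sign hj
    set x' := x + Pi.single j (y j - x j).sign
    have hcoord :
        ∀ i, (y i - x' i).natAbs + (Pi.single j 1 : Fin d → ℕ) i = (y i - x i).natAbs := by
      intro i
      by_cases hi : i = j
      · subst hi; simpa [x'] using hnatAbs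
      · simp [x', Pi.single_eq_of_ne hi]
    have hx' : x' ∈ uIcc x y := by
      rw [← pi_univ_uIcc]
      intro i _
      by_cases hi : i = j
      · subst hi; simpa [x'] using hmem
      · simp [x', Pi.single_eq_of_ne hi]
    have hadj : (latticeGraph d).Adj x x' := by
      refine latticeGraph_adj_add ?_ x
      rw [toE_single, PiLp.norm_single, Real.norm_eq_abs, ← Int.cast_abs,
        Int.abs_sign_of_ne_zero (sub_ne_zero.2 hj.symm), Int.cast_one]
    obtain ⟨W, hlen, hW⟩ := ih x' (by
      have := Finset.sum_congr rfl fun i (_ : i ∈ Finset.univ) => hcoord i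
      rw [Finset.sum_add_distrib, Finset.sum_pi_single', h] at this
      simpa using this)
    refine ⟨Walk.cons hadj W, by simp [hlen], fun z hz => ?_⟩
    rw [Walk.support_cons, List.mem_cons] at hz
    rcases hz with rfl | hz
    · exact left_mem_uIcc
    · exact uIcc_subset_uIcc hx' right_mem_uIcc (hW z hz)

lemma exists_walk_length_le_norm_sq_support_near (x y : ZD d) :
    ∃ W : (latticeGraph d).Walk x y, (W.length : ℝ) ≤ ‖toE y - toE x‖ ^ 2 ∧
      ∀ z ∈ W.support, ‖toE z - toE x‖ ≤ ‖toE y - toE x‖ := by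
  obtain ⟨W, hlen, hW⟩ := exists_walk_support_subset_uIcc x y
  refine ⟨W, ?_, fun z hz => norm_toE_sub_le_of_mem_uIcc (hW z hz)⟩
  rw [hlen, ← toE_sub]
  exact sum_natAbs_le_norm_toE_sq (y - x)

lemma exists_unit_lattice_vector_inner_ge (hd : 1 ≤ d) {u : EuclideanSpace ℝ (Fin d)}
    (hu : ‖u‖ = 1) :
    ∃ e : ZD d, ‖toE e‖ = 1 ∧ 1 ≤ d * ⟪u, toE e⟫_ℝ := by
  have hd' : (0 : ℝ) < d := by exact_mod_cast hd
  have hsum : ∑ i, u i ^ 2 = 1 := by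
    simpa [hu, Real.norm_eq_abs, sq_abs] using (EuclideanSpace.norm_sq_eq u).symm
  have hle : ∑ _i : Fin d, 1 / (d : ℝ) ≤ ∑ i, u i ^ 2 := by simp [hsum, hd'.ne']
  obtain ⟨j, -, hj⟩ := Finset.exists_le_of_sum_le (Finset.univ_nonempty_iff.2 ⟨⟨0, hd⟩⟩) hle
  have hj1 : |u j| ≤ 1 := by simpa [hu] using PiLp.norm_apply_le u j
  have hdj : 1 ≤ d * |u j| := by
    rw [← sq_abs] at hj
    rw [div_le_iff₀' hd'] at hj
    calc 1 ≤ d * |u j| ^ 2 := hj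
      _ ≤ d * |u j| := by gcongr; nlinarith [abs_nonneg (u j)]
  refine ⟨Pi.single j (if 0 ≤ u j then 1 else -1), ?_, ?_⟩
  · rw [toE_single, PiLp.norm_single]; split_ifs <;> simp
  · rw [toE_single, EuclideanSpace.inner_single_right]
    split_ifs with h
    · simpa [abs_of_nonneg h] using hdj
    · simpa [abs_of_neg (not_le.1 h)] using hdj

section Detour

variable {s : ℝ} {A : Set (EuclideanSpace ℝ (Fin d))} {w u : EuclideanSpace ℝ (Fin d)}

lemma HasTangentBalls.notMem_of_one_le_mul_inner (hT : HasTangentBalls A s w u) (hd : 1 ≤ d)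
    (hs : 103 * d ^ 5 ≤ s) {b p : EuclideanSpace ℝ (Fin d)} (hb : b ∉ A)
    (hbw : ‖b - w‖ ≤ 6 * d) (hpb : ‖p - b‖ ≤ 7 * d ^ 2) (hup : 1 ≤ d * ⟪u, p - b⟫_ℝ) :
    p ∉ A := by
  have hd' : (1 : ℝ) ≤ d := by exact_mod_cast hd
  have hs0 : 0 ≤ s := (by positivity : (0 : ℝ) ≤ 103 * d ^ 5).trans hs
  refine hT.notMem_of_inner_ge hs0 hb hbw hpb ?_
  refine le_of_mul_le_mul_left ?_ (by positivity : (0 : ℝ) < d)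
  calc (d : ℝ) * ((6 * d) ^ 2 + (6 * d + 7 * d ^ 2) ^ 2) ≤ 205 * d ^ 5 := by
        nlinarith [pow_le_pow_right₀ hd' (show 3 ≤ 5 by norm_num),
          pow_le_pow_right₀ hd' (show 4 ≤ 5 by norm_num)]
    _ ≤ 2 * s * 1 := by linarith [pow_pos (by positivity : (0 : ℝ) < d) 5]
    _ ≤ 2 * s * (d * ⟪u, p - b⟫_ℝ) := by gcongr
    _ = d * (2 * s * ⟪u, p - b⟫_ℝ) := by ring

lemma HasTangentBalls.exists_walk_add_nsmul_avoiding (hT : HasTangentBalls A s w u)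
    (hd : 1 ≤ d) (hs : 103 * d ^ 5 ≤ s) {e : ZD d} (he : ‖toE e‖ = 1)
    (hue : 1 ≤ d * ⟪u, toE e⟫_ℝ) {b : ZD d} (hb : toE b ∉ A) (hbw : ‖toE b - w‖ ≤ 6 * d)
    {n : ℕ} (hn : n ≤ 7 * d ^ 2) :
    ∃ W : (latticeGraph d).Walk b (b + n • e), W.length = n ∧ ∀ z ∈ W.support, toE z ∉ A := by
  obtain ⟨W, hlen, hW⟩ := exists_walk_add_nsmul he b n
  refine ⟨W, hlen, fun z hz => ?_⟩
  obtain ⟨k, hk, rfl⟩ := hW z hz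
  rcases Nat.eq_zero_or_pos k with rfl | hk0
  · simpa using hb
  have hk1 : (1 : ℝ) ≤ k := by exact_mod_cast hk0
  have hkn : (k : ℝ) ≤ 7 * d ^ 2 := by exact_mod_cast hk.trans hn
  rw [toE_add, toE_nsmul]
  refine hT.notMem_of_one_le_mul_inner hd hs hb hbw ?_ ?_ <;> rw [add_sub_cancel_left]
  · rwa [norm_smul, he, Real.norm_natCast, mul_one]
  · rw [inner_smul_right]
    nlinarith

lemma HasTangentBalls.exists_walk_avoiding (hT : HasTangentBalls A s w u) (hd : 1 ≤ d)
    (hs : 103 * d ^ 5 ≤ s) {x y : ZD d} (hx : toE x ∉ A) (hy : toE y ∉ A)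
    (hxw : ‖toE x - w‖ ≤ 3 * d) (hxy : ‖toE y - toE x‖ ≤ 3 * d) :
    ∃ W : (latticeGraph d).Walk x y, W.length ≤ 17 * d ^ 2 ∧ ∀ z ∈ W.support, toE z ∉ A := by
  obtain ⟨e, he, hue⟩ := exists_unit_lattice_vector_inner_ge hd hT.norm_eq_one
  set n := 4 * d ^ 2
  have hn : n ≤ 7 * d ^ 2 := by omega
  obtain ⟨W₁, hW₁len, hW₁⟩ :=
    hT.exists_walk_add_nsmul_avoiding hd hs he hue hx (by linarith) hn
  obtain ⟨W₃, hW₃len, hW₃⟩ := hT.exists_walk_add_nsmul_avoiding hd hs he hue hy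
    (by linarith [norm_sub_le_norm_sub_add_norm_sub (toE y) (toE x) w]) hn
  obtain ⟨W₂, hW₂len, hW₂⟩ :=
    exists_walk_length_le_norm_sq_support_near (x + n • e) (y + n • e)
  have hshift : toE (y + n • e) - toE (x + n • e) = toE y - toE x := by
    rw [toE_add, toE_add]; abel
  rw [hshift] at hW₂len hW₂
  -- the middle part runs at height `≥ 4 d² ⟪u, e⟫ - 3 d ≥ d` above `x`
  have hW₂A : ∀ z ∈ W₂.support, toE z ∉ A := fun z hz => by
    have hv := hW₂ z hz
    have hiv := neg_le_of_abs_le (abs_real_inner_le_norm u (toE z - toE (x + n • e)))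
    have hdecomp : toE z - toE x = (toE z - toE (x + n • e)) + (n : ℝ) • toE e := by
      rw [toE_add, toE_nsmul]; abel
    have hd' : (1 : ℝ) ≤ d := by exact_mod_cast hd
    refine hT.notMem_of_one_le_mul_inner hd hs hx (by linarith) ?_ ?_ <;> rw [hdecomp]
    · calc _ ≤ ‖toE z - toE (x + n • e)‖ + ‖(n : ℝ) • toE e‖ := norm_add_le _ _
        _ ≤ 3 * d + 4 * d ^ 2 := by
          rw [norm_smul, he, Real.norm_natCast]; push_cast [n]; linarith
        _ ≤ 7 * d ^ 2 := by nlinarith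
    · rw [inner_add_right, inner_smul_right, hT.norm_eq_one, one_mul] at *
      push_cast [n]
      nlinarith
  refine ⟨W₁.append (W₂.append W₃.reverse), ?_, fun z hz => ?_⟩
  · have : (W₂.length : ℝ) ≤ 9 * d ^ 2 := by nlinarith [norm_nonneg (toE y - toE x)]
    have : W₂.length ≤ 9 * d ^ 2 := by exact_mod_cast this
    simp only [Walk.length_append, Walk.length_reverse, hW₁len, hW₃len, n]
    omega
  simp only [Walk.mem_support_append_iff, Walk.support_reverse, List.mem_reverse] at hz
  rcases hz with hz | hz | hz
  · exact hW₁ z hz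
  · exact hW₂A z hz
  · exact hW₃ z hz

end Detour

end Lattice

/-- **Local connectivity of the complement of the discretization of a regular set**
(Lemma 6.4 of Popov–Teixeira, "Soft local times and decoupling of random
interlacements"). -/
theorem stmt_12 (d : ℕ) (hd : 1 ≤ d) :
    ∃ (s₀ : ℝ) (h₀ : ℕ), 0 < s₀ ∧
      ∀ s : ℝ, s₀ ≤ s →
      ∀ A : Set (EuclideanSpace ℝ (Fin d)), SReg d s A →
      ∀ x y : ZD d, toE x ∉ A → toE y ∉ A →
        dist (toE x) (toE y) ≤ 3 * Real.sqrt d →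
        ∃ n ≤ h₀, ∃ p : ℕ → ZD d,
          p 0 = x ∧ p n = y ∧ (∀ k < n, latAdj (p k) (p (k + 1))) ∧
          ∀ k ≤ n, toE (p k) ∉ A := by
  have hd' : (1 : ℝ) ≤ d := by exact_mod_cast hd
  refine ⟨103 * d ^ 5, 17 * d ^ 2, by positivity, fun s hs A hA x y hx hy hxy => ?_⟩
  have hxy' : ‖toE y - toE x‖ ≤ 3 * d := by
    rw [← dist_eq_norm, dist_comm]
    exact hxy.trans (by gcongr; exact Real.sqrt_le_self_iff.2 (.inr hd'))
  suffices ∃ W : (latticeGraph d).Walk x y, W.length ≤ 17 * d ^ 2 ∧ ∀ z ∈ W.support, toE z ∉ A by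
    obtain ⟨W, hlen, hW⟩ := this
    exact ⟨W.length, hlen, W.getVert, W.getVert_zero, W.getVert_length,
      fun k hk => W.adj_getVert_succ hk, fun k _ => hW _ (W.getVert_mem_support k)⟩
  by_cases hnear : ∃ a ∈ A, dist (toE x) a ≤ ‖toE y - toE x‖
  · obtain ⟨a, haA, hxa⟩ := hnear
    obtain ⟨w, hw, hwseg⟩ := exists_mem_frontier_mem_segment hA.1 hx haA
    obtain ⟨u, hT⟩ :=
      hA.exists_hasTangentBalls hd ((by positivity : (0 : ℝ) < 103 * d ^ 5).trans_le hs) hw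
    have hxw : ‖toE x - w‖ ≤ 3 * d := by
      rw [← dist_eq_norm, dist_comm]
      linarith [mem_closedBall.1 (segment_subset_closedBall_left _ _ hwseg)]
    exact hT.exists_walk_avoiding hd hs hx hy hxw hxy'
  · push Not at hnear
    obtain ⟨W, hlen, hW⟩ := exists_walk_length_le_norm_sq_support_near x y
    refine ⟨W, ?_, fun z hz hzA => ?_⟩
    · have : (W.length : ℝ) ≤ 17 * d ^ 2 := by nlinarith [norm_nonneg (toE y - toE x)]
      exact_mod_cast this
    · have := hnear _ hzA
      rw [dist_comm, dist_eq_norm] at this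
      linarith [hW z hz]
end
end
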